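/- Let m ≥ 2, α > 1/2, and let Ŷ ∈ ℝ^{n×m} admit the decomposition Ŷ = Σ_{k=1}^L σ_k p_k q_kᵀ where σ_1 > 0, σ_k ≥ 0, ‖p_k‖ = 1 and ‖q_k‖ = 1 for all k, and where q_1 = r/‖r‖ with r satisfying the power law r_g = r_max · g^(−α), r_max > 0. Then the number of rows u for which Ŷ_{u1} > Ŷ_{ui} for all i ∈ {2,…,m} (i.e., the most popular item is the top-1 recommendation for user u) is at least φ(a), where a = (√(2ζ(2α))/(1 − 2^(−α))) · ((Σ_{k=1}^L σ_k)/σ_1 − 1) and φ(a) = #{u ∈ {1,…,n} : p_{1u} > a}. Consequently the ratio η of such rows satisfies η ≥ (1/n)·φ(a). -/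

import Mathlib

open Finset

/-- Riemann zeta function for real `s > 1`: `ζ(s) = ∑_{j=1}^∞ j^(−s)`. -/
noncomputable def zetaR (s : ℝ) : ℝ := ∑' j : ℕ, ((j : ℝ) + 1) ^ (-s)

/-- Euclidean (L2) norm of a vector. -/
noncomputable def euclNormL2 {k : ℕ} (v : Fin k → ℝ) : ℝ := Real.sqrt (∑ i, v i ^ 2)

/-!
For a user `u` and an item `i ≠ 1`, write `Ŷ_{u1} − Ŷ_{ui} = Σ_k σ_k p_{ku} (q_{k1} − q_{ki})`.
Every term with `k ≠ 1` is at least `−√2 σ_k`, because the entries of a unit vector are at most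
`1` in absolute value and two of them differ by at most `√2`. The head term is bounded below
through the power law: `r_1 − r_i ≥ r_max (1 − 2^(−α))`, while `‖r‖ ≤ r_max √ζ(2α)`, so
`q_{11} − q_{1i} ≥ c := (1 − 2^(−α)) / √ζ(2α)`. The threshold `a` is exactly the value with
`σ_1 a c = √2 Σ_{k ≠ 1} σ_k`, so `p_{1u} > a` makes the head term dominate the rest.
-/

section UnitVector

variable {k : ℕ} {v : Fin k → ℝ}

lemma sum_sq_eq_one_of_euclNormL2_eq_one (h : euclNormL2 v = 1) : ∑ i, v i ^ 2 = 1 :=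
  Real.sqrt_eq_one.1 h

lemma euclNormL2_pos {i : Fin k} (hi : v i ≠ 0) : 0 < euclNormL2 v :=
  Real.sqrt_pos.2 <| sum_pos' (fun j _ => sq_nonneg (v j)) ⟨i, mem_univ i, by positivity⟩

lemma abs_le_one_of_euclNormL2_eq_one (h : euclNormL2 v = 1) (i : Fin k) : |v i| ≤ 1 := by
  rw [← sq_le_one_iff_abs_le_one, ← sum_sq_eq_one_of_euclNormL2_eq_one h]
  exact single_le_sum (fun j _ => sq_nonneg (v j)) (mem_univ i)

lemma abs_sub_le_sqrt_two_of_euclNormL2_eq_one (h : euclNormL2 v = 1) (i j : Fin k) :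
    |v i - v j| ≤ √2 := by
  apply Real.abs_le_sqrt
  rcases eq_or_ne i j with rfl | hij
  · norm_num
  · have hpair : v i ^ 2 + v j ^ 2 ≤ 1 := by
      rw [← sum_pair (f := fun x => v x ^ 2) hij, ← sum_sq_eq_one_of_euclNormL2_eq_one h]
      exact sum_le_sum_of_subset_of_nonneg (subset_univ _) fun x _ _ => sq_nonneg (v x)
    nlinarith [sq_nonneg (v i + v j)]

end UnitVector

section DominantTerm

variable {ι : Type*} [Fintype ι] [DecidableEq ι]

lemma sum_mul_pos_of_dominant {w d : ι → ℝ} {k₀ : ι} {B : ℝ} (hw : ∀ k, 0 ≤ w k)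
    (hd : ∀ k ≠ k₀, -B ≤ d k) (hhead : B * ∑ k ∈ univ.erase k₀, w k < w k₀ * d k₀) :
    0 < ∑ k, w k * d k := by
  have hrest : ∑ k ∈ univ.erase k₀, w k * -B ≤ ∑ k ∈ univ.erase k₀, w k * d k :=
    sum_le_sum fun k hk => mul_le_mul_of_nonneg_left (hd k (ne_of_mem_erase hk)) (hw k)
  rw [← sum_mul] at hrest
  rw [← add_sum_erase _ _ (mem_univ k₀)]
  linarith

lemma sum_mul_mul_lt_of_head_gap {σ x y z : ι → ℝ} {k₀ : ι} {c : ℝ} (hσ : ∀ k, 0 ≤ σ k)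
    (hx : ∀ k ≠ k₀, |x k| ≤ 1) (hyz : ∀ k ≠ k₀, |y k - z k| ≤ √2) (hc : 0 ≤ c)
    (hgap : c ≤ y k₀ - z k₀) (hhead : √2 * ∑ k ∈ univ.erase k₀, σ k < σ k₀ * x k₀ * c) :
    ∑ k, σ k * x k * z k < ∑ k, σ k * x k * y k := by
  have hx₀ : 0 ≤ x k₀ := by
    by_contra! hneg
    have : σ k₀ * x k₀ * c ≤ 0 :=
      mul_nonpos_of_nonpos_of_nonneg (mul_nonpos_of_nonneg_of_nonpos (hσ k₀) hneg.le) hc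
    linarith [mul_nonneg (Real.sqrt_nonneg 2) (sum_nonneg fun k (_ : k ∈ univ.erase k₀) => hσ k)]
  have hsplit : ∑ k, σ k * x k * y k - ∑ k, σ k * x k * z k
      = ∑ k, σ k * (x k * (y k - z k)) := by
    rw [← sum_sub_distrib]
    exact sum_congr rfl fun k _ => by ring
  rw [← sub_pos, hsplit]
  apply sum_mul_pos_of_dominant (d := fun k => x k * (y k - z k)) (B := √2) hσ
  · intro k hk
    have : |x k * (y k - z k)| ≤ 1 * √2 := by
      rw [abs_mul]
      exact mul_le_mul (hx k hk) (hyz k hk) (abs_nonneg _) zero_le_one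
    linarith [neg_abs_le (x k * (y k - z k))]
  · calc √2 * ∑ k ∈ univ.erase k₀, σ k < σ k₀ * (x k₀ * c) := by rwa [← mul_assoc]
      _ ≤ σ k₀ * (x k₀ * (y k₀ - z k₀)) :=
        mul_le_mul_of_nonneg_left (mul_le_mul_of_nonneg_left hgap hx₀) (hσ k₀)

end DominantTerm

section PowerLaw

lemma summable_nat_add_one_rpow_neg {s : ℝ} (hs : 1 < s) :
    Summable fun j : ℕ => ((j : ℝ) + 1) ^ (-s) := by
  have := (summable_nat_add_iff 1).2 (Real.summable_nat_rpow.2 (neg_lt_neg hs))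
  exact_mod_cast this

lemma sum_range_le_zetaR {s : ℝ} (hs : 1 < s) (m : ℕ) :
    ∑ j ∈ range m, ((j : ℝ) + 1) ^ (-s) ≤ zetaR s :=
  (summable_nat_add_one_rpow_neg hs).sum_le_tsum _ fun j _ => by positivity

lemma one_le_zetaR {s : ℝ} (hs : 1 < s) : 1 ≤ zetaR s := by
  simpa using sum_range_le_zetaR hs 1

variable {m : ℕ} {α rmax : ℝ} {r : Fin m → ℝ}

lemma euclNormL2_le_of_powerLaw (hα : 1 / 2 < α) (hrmax : 0 ≤ rmax)
    (hpow : ∀ g : Fin m, r g = rmax * (((g : ℕ) : ℝ) + 1) ^ (-α)) :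
    euclNormL2 r ≤ rmax * √(zetaR (2 * α)) := by
  have hsq : ∀ g : Fin m, r g ^ 2 = rmax ^ 2 * (((g : ℕ) : ℝ) + 1) ^ (-(2 * α)) := by
    intro g
    rw [hpow, mul_pow, ← Real.rpow_mul_natCast (by positivity)]
    push_cast
    ring_nf
  calc euclNormL2 r = √(rmax ^ 2 * ∑ j ∈ range m, ((j : ℝ) + 1) ^ (-(2 * α))) := by
        rw [euclNormL2, mul_sum, ← Fin.sum_univ_eq_sum_range
          (fun j => rmax ^ 2 * ((j : ℝ) + 1) ^ (-(2 * α)))]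
        simp only [hsq]
    _ ≤ √(rmax ^ 2 * zetaR (2 * α)) := Real.sqrt_le_sqrt <|
        mul_le_mul_of_nonneg_left (sum_range_le_zetaR (by linarith) m) (sq_nonneg rmax)
    _ = rmax * √(zetaR (2 * α)) := by rw [Real.sqrt_mul (sq_nonneg rmax), Real.sqrt_sq hrmax]

lemma powerLaw_apply_zero (hpow : ∀ g : Fin m, r g = rmax * (((g : ℕ) : ℝ) + 1) ^ (-α))
    (hm : 0 < m) : r ⟨0, hm⟩ = rmax := by
  simp [hpow]

lemma powerLaw_gap (hα : 0 ≤ α) (hrmax : 0 ≤ rmax)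
    (hpow : ∀ g : Fin m, r g = rmax * (((g : ℕ) : ℝ) + 1) ^ (-α)) (hm : 0 < m)
    {i : Fin m} (hi : (i : ℕ) ≠ 0) : rmax * (1 - 2 ^ (-α)) ≤ r ⟨0, hm⟩ - r i := by
  have htwo : (2 : ℝ) ≤ ((i : ℕ) : ℝ) + 1 := by
    have : (1 : ℝ) ≤ (i : ℕ) := by exact_mod_cast Nat.one_le_iff_ne_zero.2 hi
    linarith
  have hdecay := Real.rpow_le_rpow_of_nonpos two_pos htwo (neg_nonpos.2 hα)
  rw [powerLaw_apply_zero hpow, hpow i, mul_sub, mul_one]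
  linarith [mul_le_mul_of_nonneg_left hdecay hrmax]

lemma powerLaw_normalized_gap (hα : 1 / 2 < α) (hrmax : 0 < rmax)
    (hpow : ∀ g : Fin m, r g = rmax * (((g : ℕ) : ℝ) + 1) ^ (-α)) (hm : 0 < m)
    {i : Fin m} (hi : (i : ℕ) ≠ 0) :
    (1 - 2 ^ (-α)) / √(zetaR (2 * α)) ≤ r ⟨0, hm⟩ / euclNormL2 r - r i / euclNormL2 r := by
  have hdecay : 0 ≤ 1 - (2 : ℝ) ^ (-α) :=
    sub_nonneg.2 (Real.rpow_le_one_of_one_le_of_nonpos one_le_two (by linarith))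
  have hζ : 0 < √(zetaR (2 * α)) :=
    Real.sqrt_pos.2 (zero_lt_one.trans_le (one_le_zetaR (by linarith)))
  have hnorm : 0 < euclNormL2 r :=
    euclNormL2_pos (i := ⟨0, hm⟩) (by rw [powerLaw_apply_zero hpow]; exact hrmax.ne')
  rw [div_sub_div_same, div_le_div_iff₀ hζ hnorm]
  calc (1 - 2 ^ (-α)) * euclNormL2 r ≤ (1 - 2 ^ (-α)) * (rmax * √(zetaR (2 * α))) :=
        mul_le_mul_of_nonneg_left (euclNormL2_le_of_powerLaw hα hrmax.le hpow) hdecay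
    _ = rmax * (1 - 2 ^ (-α)) * √(zetaR (2 * α)) := by ring
    _ ≤ (r ⟨0, hm⟩ - r i) * √(zetaR (2 * α)) :=
        mul_le_mul_of_nonneg_right (powerLaw_gap (by linarith) hrmax.le hpow hm hi) hζ.le

end PowerLaw

/-- **popularity bias amplification.** Let `m ≥ 2`, `α > 1/2`, and let
`Ŷ ∈ ℝ^{n×m}` admit the decomposition `Ŷ = Σ_{k=1}^L σ_k p_k q_kᵀ` with `σ_1 > 0`,
`σ_k ≥ 0`, `p_k, q_k` unit vectors, and `q_1 = r/‖r‖` where `r` is a power-law vector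
`r_g = r_max g^(−α)`, `r_max > 0`.  Then the number of users `u` for which the most
popular item (index `1`, here `Fin`-index `0`) is the top-1 recommendation is at least
`φ(a)`, where `a = (√(2ζ(2α))/(1 − 2^(−α)))·((Σ_k σ_k)/σ_1 − 1)` and
`φ(a) = #{u : p_{1u} > a}`; consequently the ratio `η` of such users satisfies
`η ≥ φ(a)/n`. -/
theorem popularity_bias_amplification
    (n m L : ℕ) (hm : 2 ≤ m) (hL : 0 < L)
    (α rmax : ℝ) (hα : 1 / 2 < α) (hrmax : 0 < rmax)
    (r : Fin m → ℝ) (hpow : ∀ g : Fin m, r g = rmax * (((g : ℕ) : ℝ) + 1) ^ (-α))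
    (σ : Fin L → ℝ) (p : Fin L → Fin n → ℝ) (q : Fin L → Fin m → ℝ)
    (hσ1 : 0 < σ ⟨0, hL⟩) (hσnn : ∀ k, 0 ≤ σ k)
    (hp : ∀ k, euclNormL2 (p k) = 1) (hq : ∀ k, euclNormL2 (q k) = 1)
    (hq1 : q ⟨0, hL⟩ = fun i => r i / euclNormL2 r)
    (Yhat : Matrix (Fin n) (Fin m) ℝ)
    (hYhat : ∀ u i, Yhat u i = ∑ k, σ k * p k u * q k i)
    (a : ℝ)
    (ha : a = Real.sqrt (2 * zetaR (2 * α)) / (1 - (2 : ℝ) ^ (-α))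
        * ((∑ k, σ k) / σ ⟨0, hL⟩ - 1))
    (φa : ℕ) (hφ : φa = (Finset.univ.filter (fun u : Fin n => a < p ⟨0, hL⟩ u)).card)
    (S : Finset (Fin n))
    (hS : S = @Finset.filter (Fin n) (fun u : Fin n =>
        ∀ i : Fin m, (i : ℕ) ≠ 0 → Yhat u i < Yhat u ⟨0, by omega⟩) (fun _ => inferInstance) Finset.univ)
    (η : ℝ) (hη : η = (S.card : ℝ) / n) :
    φa ≤ S.card ∧ (φa : ℝ) / n ≤ η := by
  set k₀ : Fin L := ⟨0, hL⟩
  have hdecay : 0 < 1 - (2 : ℝ) ^ (-α) :=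
    sub_pos.2 (Real.rpow_lt_one_of_one_lt_of_neg one_lt_two (by linarith))
  have hζ : 0 < √(zetaR (2 * α)) :=
    Real.sqrt_pos.2 (zero_lt_one.trans_le (one_le_zetaR (by linarith)))
  set c := (1 - (2 : ℝ) ^ (-α)) / √(zetaR (2 * α))
  have hc : 0 < c := div_pos hdecay hζ
  have hthreshold : σ k₀ * a * c = √2 * ∑ k ∈ univ.erase k₀, σ k := by
    rw [ha, ← add_sum_erase _ _ (mem_univ k₀), Real.sqrt_mul zero_le_two]
    simp only [c]
    field_simp [hdecay.ne', hζ.ne']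
    ring
  have hsub : univ.filter (fun u => a < p k₀ u) ⊆ S := by
    intro u hu
    rw [hS]
    simp only [mem_filter, mem_univ, true_and] at hu ⊢
    intro i hi
    rw [hYhat, hYhat]
    refine sum_mul_mul_lt_of_head_gap (x := fun k => p k u) (k₀ := k₀) hσnn
      (fun k _ => abs_le_one_of_euclNormL2_eq_one (hp k) u)
      (fun k _ => abs_sub_le_sqrt_two_of_euclNormL2_eq_one (hq k) _ i) hc.le ?_ ?_
    · simpa only [hq1] using powerLaw_normalized_gap hα hrmax hpow (by omega) hi
    · rw [← hthreshold]
      exact mul_lt_mul_of_pos_right (mul_lt_mul_of_pos_left hu hσ1) hc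
  have hcard : φa ≤ S.card := hφ ▸ card_le_card hsub
  exact ⟨hcard, hη ▸ div_le_div_of_nonneg_right (by exact_mod_cast hcard) n.cast_nonneg⟩
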